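/- arXiv:1411.2467 — 4 statements merged into one kernel-verified Lean document; each statement's English description precedes it below -/
import Mathlib

section
/- For f(x) = sign(x) on [-π,π] and λ₁ = u + iv with u ≠ 0 and (u,v) ≠ (0,0), the minimum over a ∈ ℂ of ‖f − a e^{λ₁x}‖² equals Φ(u+iv) = 1 − (2u/(u²+v²))·(cosh(πu) − cos(πv))²/(π·sinh(2πu)). -/
/-!
Expanding the square, `∫ ‖f - a g‖²` is the real quadratic `A - 2 Re (conj a * B) + ‖a‖² G` in
`a`, with `A = ∫ ‖f‖²`, `B = ∫ conj g * f` and `G = ∫ ‖g‖² > 0`; completing the square, its least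
value is `A - ‖B‖² / G`, attained at `a = B / G`. For `f = sgn` and `g x = exp (λ x)` on `[-π, π]`
one has `A = 2π`, `G = sinh (2πu) / u` and `B = 2 (cosh (π conj λ) - 1) / conj λ`, and the modulus
of `B` follows from `‖cosh z - 1‖ = |cosh (re z) - cos (im z)|`.
-/

open MeasureTheory Complex

/-- The sign function: −1 for x < 0 and 1 for x ≥ 0, as a complex-valued function. -/
noncomputable def sgn (x : ℝ) : ℂ := if x < 0 then -1 else 1

open intervalIntegral ComplexConjugate

section LeastSquares

variable {𝕜 : Type*} [RCLike 𝕜]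

theorem RCLike.norm_sub_mul_sq (y z a : 𝕜) :
    ‖y - a * z‖ ^ 2 = ‖y‖ ^ 2 - 2 * RCLike.re (conj a * (conj z * y)) + ‖a‖ ^ 2 * ‖z‖ ^ 2 := by
  have h : RCLike.re (conj y * (a * z)) = RCLike.re (conj a * (conj z * y)) := by
    rw [← RCLike.conj_re]
    congr 1
    simp only [map_mul, RCLike.conj_conj]
    ring
  rw [@norm_sub_sq 𝕜, RCLike.inner_apply', h, norm_mul, mul_pow]

theorem RCLike.quadratic_eq_add_norm_sq_div (A G : ℝ) (B a : 𝕜) (hG : G ≠ 0) :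
    A - 2 * RCLike.re (conj a * B) + ‖a‖ ^ 2 * G = A - ‖B‖ ^ 2 / G + ‖B - a * G‖ ^ 2 / G := by
  rw [RCLike.norm_sub_mul_sq, RCLike.conj_ofReal, RCLike.norm_ofReal, sq_abs,
    mul_left_comm (conj a), RCLike.re_ofReal_mul]
  field_simp
  ring

variable {f g : ℝ → 𝕜} {a b : ℝ} {μ : Measure ℝ}

theorem intervalIntegral_norm_sub_mul_sq (hf : IntervalIntegrable (fun x => ‖f x‖ ^ 2) μ a b)
    (hg : IntervalIntegrable (fun x => ‖g x‖ ^ 2) μ a b)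
    (hgf : IntervalIntegrable (fun x => conj (g x) * f x) μ a b) (c : 𝕜) :
    ∫ x in a..b, ‖f x - c * g x‖ ^ 2 ∂μ =
      (∫ x in a..b, ‖f x‖ ^ 2 ∂μ) - 2 * RCLike.re (conj c * ∫ x in a..b, conj (g x) * f x ∂μ)
        + ‖c‖ ^ 2 * ∫ x in a..b, ‖g x‖ ^ 2 ∂μ := by
  have hcross : IntervalIntegrable (fun x => RCLike.re (conj c * (conj (g x) * f x))) μ a b :=
    ⟨(hgf.const_mul _).1.re, (hgf.const_mul _).2.re⟩
  simp_rw [RCLike.norm_sub_mul_sq]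
  rw [integral_add (hf.sub (hcross.const_mul 2)) (hg.const_mul _),
    integral_sub hf (hcross.const_mul 2),
    intervalIntegral.integral_const_mul, intervalIntegral.integral_const_mul,
    intervalIntegral_re (hgf.const_mul _), intervalIntegral.integral_const_mul]

theorem isLeast_intervalIntegral_norm_sub_mul_sq
    (hf : IntervalIntegrable (fun x => ‖f x‖ ^ 2) μ a b)
    (hg : IntervalIntegrable (fun x => ‖g x‖ ^ 2) μ a b)
    (hgf : IntervalIntegrable (fun x => conj (g x) * f x) μ a b) {k : ℝ} (hk : 0 ≤ k)
    (hg_pos : 0 < ∫ x in a..b, ‖g x‖ ^ 2 ∂μ) :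
    IsLeast {y | ∃ c : 𝕜, y = k * ∫ x in a..b, ‖f x - c * g x‖ ^ 2 ∂μ}
      (k * ((∫ x in a..b, ‖f x‖ ^ 2 ∂μ)
        - ‖∫ x in a..b, conj (g x) * f x ∂μ‖ ^ 2 / ∫ x in a..b, ‖g x‖ ^ 2 ∂μ)) := by
  simp_rw [intervalIntegral_norm_sub_mul_sq hf hg hgf]
  set G := ∫ x in a..b, ‖g x‖ ^ 2 ∂μ
  set B := ∫ x in a..b, conj (g x) * f x ∂μ
  simp_rw [RCLike.quadratic_eq_add_norm_sq_div _ _ B _ hg_pos.ne']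
  constructor
  · refine ⟨B / G, ?_⟩
    rw [div_mul_cancel₀ _ (RCLike.ofReal_ne_zero.2 hg_pos.ne'), sub_self, norm_zero,
      zero_pow two_ne_zero, zero_div, add_zero]
  · rintro _ ⟨c, rfl⟩
    gcongr
    exact le_add_of_nonneg_right (by positivity)

end LeastSquares

theorem measurable_sgn : Measurable sgn :=
  Measurable.ite (measurableSet_lt measurable_id measurable_const) measurable_const measurable_const

theorem norm_sgn (x : ℝ) : ‖sgn x‖ = 1 := by
  unfold sgn; split_ifs <;> simp

theorem intervalIntegrable_sgn (μ : Measure ℝ) [IsLocallyFiniteMeasure μ] (a b : ℝ) :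
    IntervalIntegrable sgn μ a b :=
  (intervalIntegrable_const (c := (1 : ℝ))).mono_fun' measurable_sgn.aestronglyMeasurable
    (ae_of_all _ fun x => (norm_sgn x).le)

theorem integral_exp_mul_sgn {c : ℂ} (hc : c ≠ 0) {b : ℝ} (hb : 0 ≤ b) :
    ∫ x in -b..b, Complex.exp (c * x) * sgn x = 2 * (Complex.cosh (b * c) - 1) / c := by
  have hint (s t : ℝ) : IntervalIntegrable (fun x : ℝ => Complex.exp (c * x) * sgn x) volume s t :=
    (intervalIntegrable_sgn volume s t).continuousOn_mul (by fun_prop)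
  have hneg : ∫ x in -b..0, Complex.exp (c * x) * sgn x = ∫ x in -b..0, -Complex.exp (c * x) := by
    refine integral_congr_ae ?_
    filter_upwards [Measure.ae_ne volume 0] with x hx0 hx
    rw [Set.uIoc_of_le (neg_nonpos.2 hb)] at hx
    simp [sgn, lt_of_le_of_ne hx.2 hx0]
  have hpos : ∫ x in 0..b, Complex.exp (c * x) * sgn x = ∫ x in 0..b, Complex.exp (c * x) := by
    refine integral_congr fun x hx => ?_
    rw [Set.uIcc_of_le hb] at hx
    simp [sgn, not_lt.2 hx.1]
  rw [← integral_add_adjacent_intervals (hint _ _) (hint _ _), hneg, hpos,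
    intervalIntegral.integral_neg, integral_exp_mul_complex hc, integral_exp_mul_complex hc,
    Complex.cosh]
  simp only [ofReal_zero, mul_zero, Complex.exp_zero, ofReal_neg, mul_neg, mul_comm (b : ℂ) c]
  ring

theorem integral_exp_mul {c : ℝ} (hc : c ≠ 0) (a b : ℝ) :
    ∫ x in a..b, Real.exp (c * x) = (Real.exp (c * b) - Real.exp (c * a)) / c := by
  rw [integral_comp_mul_left (fun x => Real.exp x) hc, integral_exp, smul_eq_mul, inv_mul_eq_div]

theorem norm_cosh_sub_one_sq (z : ℂ) :
    ‖Complex.cosh z - 1‖ ^ 2 = (Real.cosh z.re - Real.cos z.im) ^ 2 := by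
  conv_lhs => rw [← Complex.re_add_im z]
  rw [Complex.cosh_add, Complex.cosh_mul_I, Complex.sinh_mul_I, Complex.sq_norm, normSq_apply]
  simp only [sub_re, add_re, mul_re, cosh_ofReal_re, cos_ofReal_re, cosh_ofReal_im, cos_ofReal_im,
    sinh_ofReal_re, sin_ofReal_re, sinh_ofReal_im, sin_ofReal_im, I_re, I_im, one_re, sub_im,
    add_im, mul_im, one_im, mul_zero, zero_mul, mul_one, sub_zero, sub_self, add_zero, zero_add]
  linear_combination (-Real.sin z.im ^ 2) * Real.cosh_sq_sub_sinh_sq z.re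
    + (Real.cosh z.re ^ 2 - 1) * Real.sin_sq_add_cos_sq z.im

theorem conj_exp_mul_ofReal (c : ℂ) (x : ℝ) :
    conj (Complex.exp (c * x)) = Complex.exp (conj c * x) := by
  rw [← Complex.exp_conj, map_mul, Complex.conj_ofReal]

theorem norm_exp_mul_ofReal_sq (c : ℂ) (x : ℝ) :
    ‖Complex.exp (c * x)‖ ^ 2 = Real.exp (2 * c.re * x) := by
  rw [Complex.norm_exp, ← Real.exp_nat_mul, re_mul_ofReal]
  ring_nf

theorem integral_norm_sgn_sq (a b : ℝ) : ∫ x in a..b, ‖sgn x‖ ^ 2 = b - a := by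
  simp only [norm_sgn, one_pow, integral_one]

theorem integral_norm_exp_mul_sq {c : ℂ} (hc : c.re ≠ 0) (b : ℝ) :
    ∫ x in -b..b, ‖Complex.exp (c * x)‖ ^ 2 = Real.sinh (2 * b * c.re) / c.re := by
  simp_rw [norm_exp_mul_ofReal_sq]
  rw [integral_exp_mul (mul_ne_zero two_ne_zero hc), Real.sinh_eq,
    show 2 * c.re * -b = -(2 * b * c.re) by ring, mul_right_comm 2 c.re]
  field_simp

theorem norm_integral_conj_exp_mul_sgn_sq {c : ℂ} (hc : c ≠ 0) {b : ℝ} (hb : 0 ≤ b) :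
    ‖∫ x in -b..b, conj (Complex.exp (c * x)) * sgn x‖ ^ 2
      = 4 * (Real.cosh (b * c.re) - Real.cos (b * c.im)) ^ 2 / ‖c‖ ^ 2 := by
  simp_rw [conj_exp_mul_ofReal]
  rw [integral_exp_mul_sgn ((map_ne_zero _).2 hc) hb, norm_div, norm_mul, div_pow, mul_pow,
    norm_cosh_sub_one_sq, Complex.norm_conj, re_ofReal_mul, im_ofReal_mul, conj_re, conj_im,
    mul_neg, Real.cos_neg]
  norm_num

theorem one_freq_error_sign_general (u v : ℝ) (hu : u ≠ 0) :
    IsLeast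
      {y : ℝ | ∃ a : ℂ,
        y = (1 / (2 * Real.pi)) *
          ∫ x in (-Real.pi)..Real.pi,
            ‖sgn x - a * Complex.exp ((u + v * Complex.I) * x)‖ ^ 2}
      (1 - (2 * u / (u ^ 2 + v ^ 2)) *
        ((Real.cosh (Real.pi * u) - Real.cos (Real.pi * v)) ^ 2 /
          (Real.pi * Real.sinh (2 * Real.pi * u)))) := by
  set c : ℂ := u + v * Complex.I
  have hre : c.re = u := by simp [c]
  have him : c.im = v := by simp [c]
  have hnc : ‖c‖ ^ 2 = u ^ 2 + v ^ 2 := by rw [Complex.sq_norm]; exact normSq_add_mul_I u v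
  have hc : c ≠ 0 := fun h => hu (by simpa [hre] using congrArg Complex.re h)
  have hg : IntervalIntegrable (fun x : ℝ => ‖Complex.exp (c * x)‖ ^ 2) volume
      (-Real.pi) Real.pi :=
    (by fun_prop : Continuous _).intervalIntegrable _ _
  have hG_pos : 0 < ∫ x in -Real.pi..Real.pi, ‖Complex.exp (c * x)‖ ^ 2 :=
    intervalIntegral_pos_of_pos_on hg
      (fun x _ => pow_pos (norm_pos_iff.2 (Complex.exp_ne_zero _)) 2) (by linarith [Real.pi_pos])
  convert isLeast_intervalIntegral_norm_sub_mul_sq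
    (by simp only [norm_sgn, one_pow, intervalIntegrable_const]) hg
    ((intervalIntegrable_sgn volume _ _).continuousOn_mul (by fun_prop))
    (k := 1 / (2 * Real.pi)) (by positivity) hG_pos using 1
  rw [integral_norm_exp_mul_sq (hre ▸ hu), hre] at hG_pos ⊢
  rw [integral_norm_sgn_sq, norm_integral_conj_exp_mul_sgn_sq hc Real.pi_pos.le, hre, him, hnc]
  have hsinh : Real.sinh (2 * Real.pi * u) ≠ 0 := fun h => by simp [h] at hG_pos
  have huv : u ^ 2 + v ^ 2 ≠ 0 := by positivity
  field_simp
  ring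

theorem one_freq_error_sign (u v : ℝ) (hu : u ≠ 0) (huv : (u, v) ≠ (0, 0)) :
    IsLeast
      {y : ℝ | ∃ a : ℂ,
        y = (1 / (2 * Real.pi)) *
          ∫ x in (-Real.pi)..Real.pi,
            ‖sgn x - a * Complex.exp ((u + v * Complex.I) * x)‖ ^ 2}
      (1 - (2 * u / (u ^ 2 + v ^ 2)) *
        ((Real.cosh (Real.pi * u) - Real.cos (Real.pi * v)) ^ 2 /
          (Real.pi * Real.sinh (2 * Real.pi * u)))) :=
  one_freq_error_sign_general u v hu
end

section
/- There exists a unique real number v₀ in the open interval (0.1, 0.9) satisfying sin(πv₀)·πv₀ + cos(πv₀) = 1, and v₀ ∈ (0.74, 0.75). -/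
/-!
Put `f x = x sin x + cos x`, so that the equation reads `f (π v) = 1`. Since `f 0 = 1` and
`f' x = x cos x`, the function `f` increases strictly on `[0, π/2]` and decreases strictly on
`[π/2, π]`. Hence `f > 1` on `(0, π/2]`, and on `[π/2, π]` the equation has at most one root,
which numerical bounds at `0.74 π` and `0.75 π` locate between them.
-/

open Real Set

noncomputable def sinMulAddCos (x : ℝ) : ℝ := sin x * x + cos x

lemma hasDerivAt_sinMulAddCos (x : ℝ) : HasDerivAt sinMulAddCos (x * cos x) x := by
  have : HasDerivAt (fun x ↦ sin x * x + cos x) (cos x * x + sin x * 1 + -sin x) x :=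
    ((hasDerivAt_sin x).mul (hasDerivAt_id' x)).add (hasDerivAt_cos x)
  exact this.congr_deriv (by ring)

lemma continuous_sinMulAddCos : Continuous sinMulAddCos := by
  unfold sinMulAddCos
  fun_prop

lemma strictMonoOn_sinMulAddCos : StrictMonoOn sinMulAddCos (Icc 0 (π / 2)) := by
  refine strictMonoOn_of_deriv_pos (convex_Icc _ _) continuous_sinMulAddCos.continuousOn ?_
  intro x hx
  rw [interior_Icc] at hx
  obtain ⟨hx0, hx⟩ := hx
  rw [(hasDerivAt_sinMulAddCos x).deriv]
  exact mul_pos hx0 (cos_pos_of_mem_Ioo ⟨by linarith [pi_pos], hx⟩)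

lemma strictAntiOn_sinMulAddCos : StrictAntiOn sinMulAddCos (Icc (π / 2) π) := by
  refine strictAntiOn_of_deriv_neg (convex_Icc _ _) continuous_sinMulAddCos.continuousOn ?_
  intro x hx
  rw [interior_Icc] at hx
  obtain ⟨hx, hxπ⟩ := hx
  rw [(hasDerivAt_sinMulAddCos x).deriv]
  exact mul_neg_of_pos_of_neg (by linarith [pi_pos])
    (cos_neg_of_pi_div_two_lt_of_lt hx (by linarith))

lemma one_lt_sinMulAddCos {x : ℝ} (hx0 : 0 < x) (hx : x ≤ π / 2) : 1 < sinMulAddCos x := by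
  have h := strictMonoOn_sinMulAddCos ⟨le_rfl, by linarith [pi_pos]⟩ ⟨hx0.le, hx⟩ hx0
  simpa [sinMulAddCos] using h

lemma sinMulAddCos_pi_sub_two_mul (w : ℝ) :
    sinMulAddCos (π - 2 * w) = 2 * sin w * ((π - 2 * w) * cos w + sin w) - 1 := by
  simp only [sinMulAddCos, sin_pi_sub, cos_pi_sub, sin_two_mul, cos_two_mul, cos_sq']
  ring

lemma one_lt_sinMulAddCos_pi_mul_074 : 1 < sinMulAddCos (π * 0.74) := by
  set w := π * 0.13 with hw
  have hw_lo : 0.4084 < w := by linarith [pi_gt_d6]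
  have hw_hi : w < 0.40841 := by linarith [pi_lt_d6]
  -- The right side of `sinMulAddCos_pi_sub_two_mul` increases with `sin w, cos w > 0`,
  -- so Taylor lower bounds for them suffice.
  have hsin : 0.397 < sin w := by
    nlinarith [sin_ge_sub_cube (x := w) (by linarith),
      pow_lt_pow_left₀ hw_hi (by linarith) three_ne_zero]
  have hcos : 0.9166 < cos w := by nlinarith [one_sub_sq_div_two_le_cos (x := w)]
  have hlen : 2.3247 < π - 2 * w := by linarith [pi_gt_d6]
  rw [show π * 0.74 = π - 2 * w by ring, sinMulAddCos_pi_sub_two_mul]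
  nlinarith [mul_lt_mul'' hlen hcos (by norm_num) (by norm_num)]

lemma sinMulAddCos_pi_mul_075_lt_one : sinMulAddCos (π * 0.75) < 1 := by
  have hx : π * 0.75 = π - π / 4 := by ring
  have hsqrt2 : √2 < 1.415 := by
    rw [sqrt_lt' (by norm_num)]
    norm_num
  simp only [sinMulAddCos, hx, sin_pi_sub, cos_pi_sub, sin_pi_div_four, cos_pi_div_four]
  nlinarith [pi_lt_d2, sqrt_nonneg 2]

lemma mem_Ioo_of_sinMulAddCos_eq_one {x : ℝ} (hx0 : 0 < x) (hxπ : x ≤ π)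
    (h : sinMulAddCos x = 1) : x ∈ Ioo (π * 0.74) (π * 0.75) := by
  have hx : π / 2 < x := by
    by_contra! hx
    exact (one_lt_sinMulAddCos hx0 hx).ne' h
  have hpi := pi_pos
  have h074 : π * 0.74 ∈ Icc (π / 2) π := ⟨by linarith, by linarith⟩
  have h075 : π * 0.75 ∈ Icc (π / 2) π := ⟨by linarith, by linarith⟩
  have hxmem : x ∈ Icc (π / 2) π := ⟨hx.le, hxπ⟩
  constructor
  · refine (strictAntiOn_sinMulAddCos.lt_iff_gt hxmem h074).1 ?_
    linarith [one_lt_sinMulAddCos_pi_mul_074]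
  · refine (strictAntiOn_sinMulAddCos.lt_iff_gt h075 hxmem).1 ?_
    linarith [sinMulAddCos_pi_mul_075_lt_one]

lemma eq_of_sinMulAddCos_eq_one {x y : ℝ} (hx0 : 0 < x) (hxπ : x ≤ π) (hy0 : 0 < y)
    (hyπ : y ≤ π) (hfx : sinMulAddCos x = 1) (hfy : sinMulAddCos y = 1) : x = y := by
  have hx := mem_Ioo_of_sinMulAddCos_eq_one hx0 hxπ hfx
  have hy := mem_Ioo_of_sinMulAddCos_eq_one hy0 hyπ hfy
  have hpi := pi_pos
  exact strictAntiOn_sinMulAddCos.injOn ⟨by linarith [hx.1], hxπ⟩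
    ⟨by linarith [hy.1], hyπ⟩ (hfx.trans hfy.symm)

theorem critical_point_exists_unique :
    (∃! v₀ : ℝ, v₀ ∈ Set.Ioo (0.1 : ℝ) 0.9 ∧
        Real.sin (Real.pi * v₀) * (Real.pi * v₀) + Real.cos (Real.pi * v₀) = 1) ∧
      ∀ v₀ : ℝ, v₀ ∈ Set.Ioo (0.1 : ℝ) 0.9 →
        Real.sin (Real.pi * v₀) * (Real.pi * v₀) + Real.cos (Real.pi * v₀) = 1 →
        v₀ ∈ Set.Ioo (0.74 : ℝ) 0.75 := by
  change (∃! v : ℝ, v ∈ Ioo (0.1 : ℝ) 0.9 ∧ sinMulAddCos (π * v) = 1) ∧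
    ∀ v ∈ Ioo (0.1 : ℝ) 0.9, sinMulAddCos (π * v) = 1 → v ∈ Ioo (0.74 : ℝ) 0.75
  have hpi := pi_pos
  have pi_mul_mem {v : ℝ} (hv : v ∈ Ioo (0.1 : ℝ) 0.9) : 0 < π * v ∧ π * v ≤ π :=
    ⟨by nlinarith [hv.1], by nlinarith [hv.2]⟩
  have root_mem {v : ℝ} (hv : v ∈ Ioo (0.1 : ℝ) 0.9) (h : sinMulAddCos (π * v) = 1) :
      v ∈ Ioo (0.74 : ℝ) 0.75 := by
    obtain ⟨h₁, h₂⟩ := mem_Ioo_of_sinMulAddCos_eq_one (pi_mul_mem hv).1 (pi_mul_mem hv).2 h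
    exact ⟨lt_of_mul_lt_mul_left h₁ hpi.le, lt_of_mul_lt_mul_left h₂ hpi.le⟩
  obtain ⟨v, hv, hfv⟩ : ∃ v ∈ Ioo (0.74 : ℝ) 0.75, sinMulAddCos (π * v) = 1 :=
    intermediate_value_Ioo' (by norm_num)
      (continuous_sinMulAddCos.comp (continuous_const_mul π)).continuousOn
      ⟨sinMulAddCos_pi_mul_075_lt_one, one_lt_sinMulAddCos_pi_mul_074⟩
  have hv' : v ∈ Ioo (0.1 : ℝ) 0.9 := ⟨by linarith [hv.1], by linarith [hv.2]⟩
  refine ⟨⟨v, ⟨hv', hfv⟩, fun w ⟨hw, hfw⟩ => ?_⟩, fun w hw => root_mem hw⟩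
  exact mul_left_cancel₀ hpi.ne' <| eq_of_sinMulAddCos_eq_one (pi_mul_mem hw).1
    (pi_mul_mem hw).2 (pi_mul_mem hv').1 (pi_mul_mem hv').2 hfw hfv
end

section
/- The function ψ(v) = 1 − (1 − cos(πv))²/(π²v²) for v ≠ 0 (extended by ψ(0) = 1) is even, satisfies 0 ≤ ψ(v) ≤ 1 for all real v, and attains its global minimum exactly at v = ±v₀, where v₀ ∈ (0,1) is the unique positive solution of sin(πv)πv + cos(πv) = 1 in (0,1). -/
open Real

/-- The one-frequency purely imaginary approximation error for sign(x),
extended by ψ(0) = 1. -/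
noncomputable def psi (v : ℝ) : ℝ :=
  if v = 0 then 1 else 1 - (1 - Real.cos (Real.pi * v)) ^ 2 / (Real.pi ^ 2 * v ^ 2)

/-! Write ψ(v) = 1 - g(π|v|)² with g(t) = (1 - cos t)/t, which is nonnegative on [0, ∞), so
minimizing ψ means maximizing g on [0, ∞). Since g(0) = 0 and g ≤ 2/π on [π, ∞), while
g(2π/3) = 9/(4π) > 2/π, the maximum is attained, and only inside (0, π). There
g'(t) = (t sin t - (1 - cos t))/t² vanishes, i.e. t sin t + cos t = 1, so by uniqueness of that
solution every maximizer equals π v₀. -/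

open Set

-- At `t = 0` the division by zero gives `0`, matching `ψ(0) = 1` in `psi_eq_one_sub_sq`.
noncomputable def oneSubCosDiv (t : ℝ) : ℝ := (1 - cos t) / t

lemma one_sub_cos_le_abs (t : ℝ) : 1 - cos t ≤ |t| := by
  rcases le_or_gt |t| 2 with ht | ht
  · have := one_sub_sq_div_two_le_cos (x := t)
    nlinarith [sq_abs t, abs_nonneg t]
  · linarith [neg_one_le_cos t]

lemma oneSubCosDiv_zero : oneSubCosDiv 0 = 0 := by simp [oneSubCosDiv]

lemma oneSubCosDiv_neg (t : ℝ) : oneSubCosDiv (-t) = -oneSubCosDiv t := by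
  simp [oneSubCosDiv, div_neg]

lemma oneSubCosDiv_nonneg {t : ℝ} (ht : 0 ≤ t) : 0 ≤ oneSubCosDiv t :=
  div_nonneg (by linarith [cos_le_one t]) ht

lemma abs_oneSubCosDiv_le_one (t : ℝ) : |oneSubCosDiv t| ≤ 1 := by
  rw [oneSubCosDiv, abs_div, abs_of_nonneg (by linarith [cos_le_one t] : 0 ≤ 1 - cos t)]
  exact div_le_one_of_le₀ (one_sub_cos_le_abs t) (abs_nonneg t)

lemma abs_oneSubCosDiv_le_abs_div_two (t : ℝ) : |oneSubCosDiv t| ≤ |t| / 2 := by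
  rcases eq_or_ne t 0 with rfl | ht
  · simp [oneSubCosDiv_zero]
  rw [oneSubCosDiv, abs_div, abs_of_nonneg (by linarith [cos_le_one t] : 0 ≤ 1 - cos t),
    div_le_iff₀ (abs_pos.mpr ht)]
  nlinarith [one_sub_sq_div_two_le_cos (x := t), sq_abs t]

lemma oneSubCosDiv_le_two_div_pi {t : ℝ} (ht : π ≤ t) : oneSubCosDiv t ≤ 2 / π := by
  rw [oneSubCosDiv, div_le_div_iff₀ (pi_pos.trans_le ht) pi_pos]
  nlinarith [neg_one_le_cos t, pi_pos]

lemma oneSubCosDiv_two_pi_div_three : oneSubCosDiv (2 * π / 3) = 9 / (4 * π) := by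
  have hcos : cos (2 * π / 3) = -1 / 2 := by
    rw [show 2 * π / 3 = π - π / 3 by ring, cos_pi_sub, cos_pi_div_three]; norm_num
  rw [oneSubCosDiv, hcos]
  field_simp
  norm_num

lemma two_div_pi_lt_oneSubCosDiv_two_pi_div_three : 2 / π < oneSubCosDiv (2 * π / 3) := by
  rw [oneSubCosDiv_two_pi_div_three]
  have := pi_pos
  rw [div_lt_div_iff₀ pi_pos (by positivity)]
  nlinarith

lemma continuous_oneSubCosDiv : Continuous oneSubCosDiv := by
  rw [continuous_iff_continuousAt]
  intro t
  rcases eq_or_ne t 0 with rfl | ht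
  · have h : Filter.Tendsto (fun t : ℝ => |t| / 2) (nhds 0) (nhds 0) := by
      simpa using (continuous_abs.div_const (2 : ℝ)).tendsto (0 : ℝ)
    simpa [ContinuousAt, oneSubCosDiv_zero] using
      squeeze_zero_norm abs_oneSubCosDiv_le_abs_div_two h
  · exact ((continuous_const.sub continuous_cos).continuousAt).div continuousAt_id ht

lemma hasDerivAt_oneSubCosDiv {t : ℝ} (ht : t ≠ 0) :
    HasDerivAt oneSubCosDiv ((sin t * t - (1 - cos t)) / t ^ 2) t := by
  have h : HasDerivAt (fun x => (1 - cos x) / x) ((- -sin t * t - (1 - cos t) * 1) / t ^ 2) t :=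
    ((hasDerivAt_cos t).const_sub 1).fun_div (hasDerivAt_id' t) ht
  exact h.congr_deriv (by ring)

lemma sin_mul_add_cos_eq_one_of_isLocalExtr {t : ℝ} (ht : t ≠ 0)
    (h : IsLocalExtr oneSubCosDiv t) : sin t * t + cos t = 1 := by
  have := h.hasDerivAt_eq_zero (hasDerivAt_oneSubCosDiv ht)
  rw [div_eq_zero_iff, or_iff_left (pow_ne_zero 2 ht)] at this
  linarith

lemma oneSubCosDiv_lt_two_pi_div_three_of_pi_le {t : ℝ} (ht : π ≤ t) :
    oneSubCosDiv t < oneSubCosDiv (2 * π / 3) :=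
  (oneSubCosDiv_le_two_div_pi ht).trans_lt two_div_pi_lt_oneSubCosDiv_two_pi_div_three

lemma exists_isMaxOn_oneSubCosDiv : ∃ c, 0 ≤ c ∧ IsMaxOn oneSubCosDiv (Ici 0) c := by
  obtain ⟨c, hc, hmax⟩ := isCompact_Icc.exists_isMaxOn (nonempty_Icc.2 pi_pos.le)
    continuous_oneSubCosDiv.continuousOn
  refine ⟨c, hc.1, fun t (ht : 0 ≤ t) => ?_⟩
  rcases le_or_gt t π with htπ | htπ
  · exact hmax ⟨ht, htπ⟩
  · have h23 : 2 * π / 3 ∈ Icc 0 π := ⟨by positivity, by linarith [pi_pos]⟩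
    exact ((oneSubCosDiv_lt_two_pi_div_three_of_pi_le htπ.le).trans_le (hmax h23)).le

lemma mem_Ioo_of_isMaxOn_oneSubCosDiv {c : ℝ} (hc : 0 ≤ c)
    (h : IsMaxOn oneSubCosDiv (Ici 0) c) : c ∈ Ioo 0 π := by
  have h23 : oneSubCosDiv (2 * π / 3) ≤ oneSubCosDiv c := h (mem_Ici.2 (by positivity))
  refine ⟨hc.lt_of_ne ?_,
    lt_of_not_ge fun hπ => (oneSubCosDiv_lt_two_pi_div_three_of_pi_le hπ).not_ge h23⟩
  rintro rfl
  rw [oneSubCosDiv_zero] at h23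
  linarith [two_div_pi_lt_oneSubCosDiv_two_pi_div_three, div_pos two_pos pi_pos]

lemma sin_mul_add_cos_eq_one_of_isMaxOn {c : ℝ} (hc : 0 ≤ c)
    (h : IsMaxOn oneSubCosDiv (Ici 0) c) : sin c * c + cos c = 1 :=
  have hc' := mem_Ioo_of_isMaxOn_oneSubCosDiv hc h
  sin_mul_add_cos_eq_one_of_isLocalExtr hc'.1.ne' (h.isExtr.isLocalExtr (Ici_mem_nhds hc'.1))

lemma psi_eq_one_sub_sq (v : ℝ) : psi v = 1 - oneSubCosDiv (π * |v|) ^ 2 := by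
  rcases eq_or_ne v 0 with rfl | hv
  · simp [psi, oneSubCosDiv_zero]
  have hcos : cos (π * |v|) = cos (π * v) := by
    rw [← cos_abs, abs_mul, abs_abs, ← abs_mul, cos_abs]
  rw [psi, if_neg hv, oneSubCosDiv, hcos, div_pow, mul_pow, sq_abs]

lemma psi_neg (v : ℝ) : psi (-v) = psi v := by
  rw [psi_eq_one_sub_sq, psi_eq_one_sub_sq, abs_neg]

lemma psi_nonneg (v : ℝ) : 0 ≤ psi v := by
  rw [psi_eq_one_sub_sq, sub_nonneg, sq_le_one_iff_abs_le_one]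
  exact abs_oneSubCosDiv_le_one _

lemma psi_le_one (v : ℝ) : psi v ≤ 1 := by
  rw [psi_eq_one_sub_sq]
  linarith [sq_nonneg (oneSubCosDiv (π * |v|))]

lemma psi_le_psi_iff (v w : ℝ) :
    psi v ≤ psi w ↔ oneSubCosDiv (π * |w|) ≤ oneSubCosDiv (π * |v|) := by
  rw [psi_eq_one_sub_sq, psi_eq_one_sub_sq, sub_le_sub_iff_left,
    pow_le_pow_iff_left₀ (oneSubCosDiv_nonneg (by positivity))
      (oneSubCosDiv_nonneg (by positivity)) two_ne_zero]

theorem psi_properties_general (v₀ : ℝ)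
    (huniq : ∀ w ∈ Set.Ioo (0 : ℝ) 1,
      Real.sin (Real.pi * w) * (Real.pi * w) + Real.cos (Real.pi * w) = 1 → w = v₀) :
    (∀ v : ℝ, psi (-v) = psi v) ∧
      (∀ v : ℝ, 0 ≤ psi v ∧ psi v ≤ 1) ∧
      (∀ v : ℝ, psi v₀ ≤ psi v) ∧
      (∀ v : ℝ, psi v = psi v₀ → v = v₀ ∨ v = -v₀) := by
  have hmax_eq : ∀ c, 0 ≤ c → IsMaxOn oneSubCosDiv (Ici 0) c → c = π * v₀ := by
    intro c hc hmax
    obtain ⟨hc0, hcπ⟩ := mem_Ioo_of_isMaxOn_oneSubCosDiv hc hmax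
    have hcrit := sin_mul_add_cos_eq_one_of_isMaxOn hc hmax
    rw [← mul_div_cancel₀ c pi_ne_zero] at hcrit
    rw [← huniq (c / π) ⟨by positivity, (div_lt_one pi_pos).2 hcπ⟩ hcrit,
      mul_div_cancel₀ c pi_ne_zero]
  obtain ⟨c, hc, hmax⟩ := exists_isMaxOn_oneSubCosDiv
  obtain rfl := hmax_eq c hc hmax
  have hv₀ : |v₀| = v₀ := abs_of_nonneg (nonneg_of_mul_nonneg_right hc pi_pos)
  refine ⟨psi_neg, fun v => ⟨psi_nonneg v, psi_le_one v⟩,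
    fun v => (psi_le_psi_iff v₀ v).2 (by rw [hv₀]; exact hmax (mem_Ici.2 (by positivity))),
    fun v hv => ?_⟩
  have hle : oneSubCosDiv (π * v₀) ≤ oneSubCosDiv (π * |v|) :=
    hv₀ ▸ (psi_le_psi_iff v v₀).1 hv.le
  have habs := hmax_eq _ (by positivity) fun t ht => (hmax ht).trans hle
  exact (abs_eq (hv₀ ▸ abs_nonneg v₀)).1 (mul_left_cancel₀ pi_ne_zero habs)

theorem psi_properties (v₀ : ℝ) (hv₀ : v₀ ∈ Set.Ioo (0 : ℝ) 1)
    (heq : Real.sin (Real.pi * v₀) * (Real.pi * v₀) + Real.cos (Real.pi * v₀) = 1)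
    (huniq : ∀ w ∈ Set.Ioo (0 : ℝ) 1,
      Real.sin (Real.pi * w) * (Real.pi * w) + Real.cos (Real.pi * w) = 1 → w = v₀) :
    (∀ v : ℝ, psi (-v) = psi v) ∧
      (∀ v : ℝ, 0 ≤ psi v ∧ psi v ≤ 1) ∧
      (∀ v : ℝ, psi v₀ ≤ psi v) ∧
      (∀ v : ℝ, psi v = psi v₀ → v = v₀ ∨ v = -v₀) :=
  psi_properties_general v₀ huniq
end

section
/- Let f(x) = sign(x) on [-π,π]. The minimum over a, b ∈ ℂ of ‖f − a·1 − b·x‖² (approximation by the expo-polynomials e^{0·x} = 1 and x·e^{0·x} = x) equals 1/4. -/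
open MeasureTheory Complex

/-!
On each half of `[-π, π]` the sign is constant, so the squared error is the integral of a real
quadratic polynomial in `x`. Together the two halves give the mean squared error
`1 + |a|² + π²|b|²/3 - π Re b`, whose minimum `1/4` is attained at `a = 0`, `b = 3/(2π)`.
-/

open Set ComplexConjugate

lemma integral_norm_sub_mul_sq (c b : ℂ) (A B : ℝ) :
    ∫ x in A..B, ‖c - b * x‖ ^ 2 =
      ‖c‖ ^ 2 * (B - A) - (c * conj b).re * (B ^ 2 - A ^ 2) + ‖b‖ ^ 2 * (B ^ 3 - A ^ 3) / 3 := by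
  have expand (x : ℝ) :
      ‖c - b * x‖ ^ 2 = ‖c‖ ^ 2 - 2 * (c * conj b).re * x + ‖b‖ ^ 2 * x ^ 2 := by
    simp only [Complex.sq_norm, normSq_sub, normSq_ofReal, map_mul, conj_ofReal, ← mul_assoc,
      re_mul_ofReal]
    ring
  have hint {f : ℝ → ℝ} (hf : Continuous f) := hf.intervalIntegrable (μ := volume) A B
  simp only [expand]
  rw [intervalIntegral.integral_add (hint (by fun_prop)) (hint (by fun_prop)),
    intervalIntegral.integral_sub (hint (by fun_prop)) (hint (by fun_prop)),
    intervalIntegral.integral_const_mul, intervalIntegral.integral_const_mul, integral_id,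
    integral_pow, intervalIntegral.integral_const, smul_eq_mul]
  ring

lemma integral_comp_sgn {E : Type*} [NormedAddCommGroup E] [NormedSpace ℝ E] (F : ℂ → ℝ → E)
    (hneg : Continuous (F (-1))) (hpos : Continuous (F 1)) {a b : ℝ} (ha : a ≤ 0) (hb : 0 ≤ b) :
    ∫ x in a..b, F (sgn x) x = (∫ x in a..0, F (-1) x) + ∫ x in 0..b, F 1 x := by
  have eq_neg : EqOn (fun x => F (sgn x) x) (F (-1)) (uIoo a 0) := by
    intro x hx
    rw [uIoo_of_le ha] at hx
    simp [sgn, hx.2]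
  have eq_pos : EqOn (fun x => F (sgn x) x) (F 1) (uIoo 0 b) := by
    intro x hx
    rw [uIoo_of_le hb] at hx
    simp [sgn, not_lt.2 hx.1.le]
  rw [← intervalIntegral.integral_add_adjacent_intervals
      ((hneg.intervalIntegrable a 0).congr_uIoo eq_neg.symm)
      ((hpos.intervalIntegrable 0 b).congr_uIoo eq_pos.symm),
    intervalIntegral.integral_congr_uIoo eq_neg, intervalIntegral.integral_congr_uIoo eq_pos]

lemma mean_norm_sgn_sub_affine_sq (a b : ℂ) :
    (1 / (2 * Real.pi)) * ∫ x in (-Real.pi)..Real.pi, ‖sgn x - a - b * x‖ ^ 2 =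
      1 + ‖a‖ ^ 2 + ‖b‖ ^ 2 * Real.pi ^ 2 / 3 - Real.pi * b.re := by
  rw [integral_comp_sgn (fun c x => ‖c - a - b * x‖ ^ 2) (by fun_prop) (by fun_prop)
      (neg_nonpos.2 Real.pi_pos.le) Real.pi_pos.le,
    integral_norm_sub_mul_sq, integral_norm_sub_mul_sq]
  simp only [Complex.sq_norm, normSq_apply, mul_re, sub_re, sub_im, neg_re, neg_im, one_re,
    one_im, conj_re, conj_im]
  field_simp
  ring

theorem cluster_zero_min :
    IsLeast
      {y : ℝ | ∃ a b : ℂ,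
        y = (1 / (2 * Real.pi)) *
          ∫ x in (-Real.pi)..Real.pi, ‖sgn x - a - b * x‖ ^ 2}
      (1 / 4) := by
  refine ⟨⟨0, (3 / (2 * Real.pi) : ℝ), ?_⟩, ?_⟩
  · rw [mean_norm_sgn_sub_affine_sq, norm_zero, norm_real, Real.norm_of_nonneg (by positivity),
      ofReal_re]
    field_simp
    ring
  · rintro y ⟨a, b, rfl⟩
    rw [mean_norm_sgn_sub_affine_sq]
    have hre : b.re ^ 2 ≤ ‖b‖ ^ 2 := by
      rw [sq_le_sq, abs_norm]
      exact abs_re_le_norm b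
    nlinarith [sq_nonneg (2 * Real.pi * b.re - 3), sq_nonneg ‖a‖, Real.pi_pos, sq_nonneg Real.pi]
end
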